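/- With η_f := max_x P(S=1|X_f=x) attained at some point x*, the decision variable Ŷ_f^{DI} with P(Ŷ_f^{DI}=1|X_f=x) = γ·1[P(S=1|X_f=x)=η_f] (for a constant γ ∈ (0,1]) achieves DI(Ŷ_f^{DI},S) = 1 − [P(S=1)(1−η_f)] / [P(S=0)·η_f], i.e., the upper bound on normalized disparate impact is tight. -/

import Mathlib

open Finset Classical Real

open Classical in
/-- Probability of event `E` under weight function `p` on a finite sample space. -/
noncomputable def Pr {Ω : Type*} [Fintype Ω] (p : Ω → ℝ) (E : Ω → Prop) : ℝ :=
  ∑ ω, if E ω then p ω else 0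

/-- Conditional probability `P(A | B)`. -/
noncomputable def cPr {Ω : Type*} [Fintype Ω] (p : Ω → ℝ) (A B : Ω → Prop) : ℝ :=
  Pr p (fun ω => A ω ∧ B ω) / Pr p B

/-- Statistical parity `SP(Ŷ,S) = P(Ŷ=1|S=1) - P(Ŷ=1|S=0)`. -/
noncomputable def SP {Ω : Type*} [Fintype Ω] (p : Ω → ℝ) (Yhat S : Ω → Bool) : ℝ :=
  cPr p (fun ω => Yhat ω = true) (fun ω => S ω = true)
    - cPr p (fun ω => Yhat ω = true) (fun ω => S ω = false)

/-- Balanced error rate `BER(Ŷ,S) = ½P(Ŷ=1|S=0) + ½P(Ŷ=0|S=1)`. -/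
noncomputable def BER {Ω : Type*} [Fintype Ω] (p : Ω → ℝ) (Yhat S : Ω → Bool) : ℝ :=
  (1/2) * cPr p (fun ω => Yhat ω = true) (fun ω => S ω = false)
    + (1/2) * cPr p (fun ω => Yhat ω = false) (fun ω => S ω = true)

/-- `Ŷ` is conditionally independent of `S` given `Z`. -/
def CondIndepGiven {Ω 𝒳 : Type*} [Fintype Ω] (p : Ω → ℝ) (Yhat S : Ω → Bool)
    (Z : Ω → 𝒳) : Prop :=
  ∀ x : 𝒳, 0 < Pr p (fun ω => Z ω = x) →
    cPr p (fun ω => Yhat ω = true ∧ S ω = true) (fun ω => Z ω = x)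
      = cPr p (fun ω => Yhat ω = true) (fun ω => Z ω = x)
        * cPr p (fun ω => S ω = true) (fun ω => Z ω = x)

/-- Normalized disparate impact `DI(Ŷ,S) = 1 - P(Ŷ=1|S=0)/P(Ŷ=1|S=1)`. -/
noncomputable def DI {Ω : Type*} [Fintype Ω] (p : Ω → ℝ) (Yhat S : Ω → Bool) : ℝ :=
  1 - cPr p (fun ω => Yhat ω = true) (fun ω => S ω = false)
      / cPr p (fun ω => Yhat ω = true) (fun ω => S ω = true)

/-!
On each fibre `X_f = x`, conditional independence gives
`P(Ŷ = 1, S = s, X_f = x) = P(Ŷ = 1 | x) · P(S = s | x) · P(X_f = x)`. Since `Ŷ` only fires on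
fibres with `P(S = 1 | x) = η_f`, every fibre, and hence the sum over fibres, satisfies
`η_f · P(Ŷ = 1, S = 0) = (1 - η_f) · P(Ŷ = 1, S = 1)`, which is the claimed value of `DI`.
-/

section Pr

variable {Ω 𝒳 : Type*} [Fintype Ω] {p : Ω → ℝ}

lemma Pr_nonneg (hp : ∀ ω, 0 ≤ p ω) (E : Ω → Prop) : 0 ≤ Pr p E :=
  Finset.sum_nonneg fun ω _ => by split_ifs <;> simp [hp ω]

lemma Pr_mono (hp : ∀ ω, 0 ≤ p ω) {A B : Ω → Prop} (h : ∀ ω, A ω → B ω) :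
    Pr p A ≤ Pr p B :=
  Finset.sum_le_sum fun ω _ => by
    by_cases hA : A ω
    · simp [hA, h ω hA]
    · simp only [hA, if_false]; split_ifs <;> simp [hp ω]

lemma Pr_and_eq_zero (hp : ∀ ω, 0 ≤ p ω) {B : Ω → Prop} (hB : Pr p B = 0) (A : Ω → Prop) :
    Pr p (fun ω => A ω ∧ B ω) = 0 :=
  le_antisymm (hB ▸ Pr_mono hp fun _ h => h.2) (Pr_nonneg hp _)

lemma Pr_eq_Pr_and_true_add_Pr_and_false (E : Ω → Prop) (S : Ω → Bool) :
    Pr p E = Pr p (fun ω => E ω ∧ S ω = true) + Pr p (fun ω => E ω ∧ S ω = false) := by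
  unfold Pr
  rw [← Finset.sum_add_distrib]
  refine Finset.sum_congr rfl fun ω _ => ?_
  cases hS : S ω <;> by_cases hE : E ω <;> simp [hE, hS]

lemma Pr_eq_sum_fiber [Fintype 𝒳] (E : Ω → Prop) (X : Ω → 𝒳) :
    Pr p E = ∑ x, Pr p (fun ω => E ω ∧ X ω = x) := by
  unfold Pr
  rw [Finset.sum_comm]
  refine Finset.sum_congr rfl fun ω _ => ?_
  by_cases hE : E ω <;> simp [hE]

lemma Pr_and_eq_cPr_mul (A : Ω → Prop) {B : Ω → Prop} (hB : Pr p B ≠ 0) :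
    Pr p (fun ω => A ω ∧ B ω) = cPr p A B * Pr p B :=
  (div_mul_cancel₀ _ hB).symm

end Pr

namespace CondIndepGiven

variable {Ω 𝒳 : Type*} [Fintype Ω] {p : Ω → ℝ} {Y S : Ω → Bool} {X : Ω → 𝒳} {x : 𝒳}

lemma Pr_fiber_and_true (hci : CondIndepGiven p Y S X) (hx : 0 < Pr p (fun ω => X ω = x)) :
    Pr p (fun ω => (Y ω = true ∧ S ω = true) ∧ X ω = x)
      = cPr p (fun ω => Y ω = true) (fun ω => X ω = x)
        * cPr p (fun ω => S ω = true) (fun ω => X ω = x) * Pr p (fun ω => X ω = x) := by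
  rw [Pr_and_eq_cPr_mul _ hx.ne', hci x hx]

lemma Pr_fiber_and_false (hci : CondIndepGiven p Y S X) (hx : 0 < Pr p (fun ω => X ω = x)) :
    Pr p (fun ω => (Y ω = true ∧ S ω = false) ∧ X ω = x)
      = cPr p (fun ω => Y ω = true) (fun ω => X ω = x)
        * (1 - cPr p (fun ω => S ω = true) (fun ω => X ω = x)) * Pr p (fun ω => X ω = x) := by
  have hsplit : Pr p (fun ω => Y ω = true ∧ X ω = x)
      = Pr p (fun ω => (Y ω = true ∧ S ω = true) ∧ X ω = x)
        + Pr p (fun ω => (Y ω = true ∧ S ω = false) ∧ X ω = x) := by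
    rw [Pr_eq_Pr_and_true_add_Pr_and_false _ S]
    congr 2 <;> ext ω <;> tauto
  rw [Pr_and_eq_cPr_mul _ hx.ne', hci.Pr_fiber_and_true hx] at hsplit
  linear_combination -hsplit

lemma mul_Pr_and_false_eq [Fintype 𝒳] (hp : ∀ ω, 0 ≤ p ω) (hci : CondIndepGiven p Y S X)
    {c : ℝ} (hY : ∀ x, 0 < Pr p (fun ω => X ω = x) →
      cPr p (fun ω => S ω = true) (fun ω => X ω = x) ≠ c →
      cPr p (fun ω => Y ω = true) (fun ω => X ω = x) = 0) :
    c * Pr p (fun ω => Y ω = true ∧ S ω = false)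
      = (1 - c) * Pr p (fun ω => Y ω = true ∧ S ω = true) := by
  rw [Pr_eq_sum_fiber _ X, Pr_eq_sum_fiber (fun ω => Y ω = true ∧ S ω = true) X,
    Finset.mul_sum, Finset.mul_sum]
  refine Finset.sum_congr rfl fun x _ => ?_
  rcases (Pr_nonneg hp fun ω => X ω = x).eq_or_lt with hx | hx
  · simp only [Pr_and_eq_zero hp hx.symm, mul_zero]
  rw [hci.Pr_fiber_and_false hx, hci.Pr_fiber_and_true hx]
  by_cases hη : cPr p (fun ω => S ω = true) (fun ω => X ω = x) = c
  · rw [hη]; ring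
  · rw [hY x hx hη]; ring

end CondIndepGiven

lemma DI_eq_of_mul_Pr_and_false_eq {Ω : Type*} [Fintype Ω] {p : Ω → ℝ} {Y S : Ω → Bool}
    {c : ℝ} (hc : c ≠ 0) (hY : Pr p (fun ω => Y ω = true ∧ S ω = true) ≠ 0)
    (h : c * Pr p (fun ω => Y ω = true ∧ S ω = false)
      = (1 - c) * Pr p (fun ω => Y ω = true ∧ S ω = true)) :
    DI p Y S = 1 - Pr p (fun ω => S ω = true) * (1 - c) / (Pr p (fun ω => S ω = false) * c) := by
  have hfalse : Pr p (fun ω => Y ω = true ∧ S ω = false)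
      = (1 - c) / c * Pr p (fun ω => Y ω = true ∧ S ω = true) := by
    rw [div_mul_eq_mul_div, eq_div_iff hc, ← h, mul_comm]
  unfold DI cPr
  rw [div_div_div_eq, hfalse]
  field_simp

theorem stmt6_general {Ω 𝒳 : Type*} [Fintype Ω] [Fintype 𝒳] (p : Ω → ℝ) (hp : ∀ ω, 0 ≤ p ω)
    (S YfDI : Ω → Bool) (Xf : Ω → 𝒳)
    (ηf : ℝ)
    (hη0 : 0 < ηf)
    (γ : ℝ)
    (hci : CondIndepGiven p YfDI S Xf)
    (hdef : ∀ x : 𝒳, 0 < Pr p (fun ω => Xf ω = x) →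
      cPr p (fun ω => YfDI ω = true) (fun ω => Xf ω = x)
        = if cPr p (fun ω => S ω = true) (fun ω => Xf ω = x) = ηf then γ else 0)
    (hpos : 0 < Pr p (fun ω => YfDI ω = true ∧ S ω = true)) :
    DI p YfDI S = 1 - (Pr p (fun ω => S ω = true) * (1 - ηf))
      / (Pr p (fun ω => S ω = false) * ηf) :=
  DI_eq_of_mul_Pr_and_false_eq hη0.ne' hpos.ne' <|
    hci.mul_Pr_and_false_eq hp fun x hx hne => by rw [hdef x hx, if_neg hne]

/-- the decision variable `Ŷ_f^{DI}` with
`P(Ŷ_f^{DI}=1|X_f=x) = γ·1[P(S=1|X_f=x)=η_f]` attains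
`DI(Ŷ_f^{DI},S) = 1 - P(S=1)(1-η_f) / (P(S=0)·η_f)`, so the bound is tight. -/
theorem stmt6 {Ω 𝒳 : Type*} [Fintype Ω] [Fintype 𝒳] (p : Ω → ℝ) (hp : ∀ ω, 0 ≤ p ω)
    (hsum : ∑ ω, p ω = 1) (S YfDI : Ω → Bool) (Xf : Ω → 𝒳)
    (hS1 : 0 < Pr p (fun ω => S ω = true)) (hS1' : Pr p (fun ω => S ω = true) < 1)
    (ηf : ℝ)
    (hηub : ∀ x : 𝒳, 0 < Pr p (fun ω => Xf ω = x) →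
      cPr p (fun ω => S ω = true) (fun ω => Xf ω = x) ≤ ηf)
    (hηatt : ∃ x : 𝒳, 0 < Pr p (fun ω => Xf ω = x) ∧
      cPr p (fun ω => S ω = true) (fun ω => Xf ω = x) = ηf)
    (hη0 : 0 < ηf) (hηlt : ηf < 1)
    (γ : ℝ) (hγ0 : 0 < γ) (hγ1 : γ ≤ 1)
    (hci : CondIndepGiven p YfDI S Xf)
    (hdef : ∀ x : 𝒳, 0 < Pr p (fun ω => Xf ω = x) →
      cPr p (fun ω => YfDI ω = true) (fun ω => Xf ω = x)
        = if cPr p (fun ω => S ω = true) (fun ω => Xf ω = x) = ηf then γ else 0)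
    (hpos : 0 < Pr p (fun ω => YfDI ω = true ∧ S ω = true)) :
    DI p YfDI S = 1 - (Pr p (fun ω => S ω = true) * (1 - ηf))
      / (Pr p (fun ω => S ω = false) * ηf) :=
  stmt6_general p hp S YfDI Xf ηf hη0 γ hci hdef hpos
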